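/- Let p be a prime, K a finite extension of ℚ_p with ring of integers 𝔬 and normalized additive valuation ord. Let B ∈ 𝓗_n(𝔬)^{nd}, let (a_1,…,a_n) = GK(B) be its Gross–Keating invariant, and let 1 ≤ r ≤ n−1. Then for every X ∈ M_{n,r}(𝔬) with det(ᵗX·B·X) ≠ 0, one has 𝔢_r(GK(B)) ≤ ord(2^{2⌊r/2⌋}·det(ᵗX·B·X)). -/

import Mathlib

/-!
Pick `U ∈ GL_n(𝔬)` with `GK(B) ∈ S(ᵗU B U)`; with `C = ᵗU B U` and `Y = U⁻¹ X` we have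
`ᵗX B X = ᵗY C Y`. Expanding `det (ᵗY C Y)` by multilinearity writes it as a sum of the
`r × r` minors `det C[g, h]` with integral coefficients. Every entry of `2 C[g, h]` has
valuation at least `(a_{g i} + a_{h j}) / 2`, so `2^r det C[g, h]` has valuation at least
`a_1 + ⋯ + a_r`, as `a` is nondecreasing and a nonzero minor has injective `g` and `h`.
For odd `r` one factor `2` is saved: the terms of `(g, h)` and `(h, g)` are equal, and inside
a principal minor so are those of `σ` and `σ⁻¹`, while an involution of an odd number of
indices moves fewer than `r` of them.
-/

open scoped Classical
open Matrix

/-- `S(B)`: nondecreasing sequences `(a_1,…,a_n)` of nonnegative integers with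
`ord(b_ii) ≥ a_i` and `ord(2 b_ij) ≥ (a_i+a_j)/2`. -/
def Sset {K : Type} [Field K] (v : AddValuation K (WithTop ℤ)) {n : ℕ}
    (B : Matrix (Fin n) (Fin n) K) : Set (Fin n → ℕ) :=
  {a | Monotone a ∧ (∀ i, ((a i : ℤ) : WithTop ℤ) ≤ v (B i i)) ∧
    ∀ i j, (((a i : ℤ) + (a j : ℤ) : ℤ) : WithTop ℤ) ≤ v (2 * B i j) + v (2 * B i j)}

/-- `S({B}) = ⋃_{U ∈ GL_n(𝔬)} S(ᵗU·B·U)`. -/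
def SsetFull {K : Type} [Field K] (v : AddValuation K (WithTop ℤ)) {n : ℕ}
    (B : Matrix (Fin n) (Fin n) K) : Set (Fin n → ℕ) :=
  {a | ∃ U : Matrix (Fin n) (Fin n) K, (∀ i j, 0 ≤ v (U i j)) ∧
    (∃ W : Matrix (Fin n) (Fin n) K,
      (∀ i j, 0 ≤ v (W i j)) ∧ U * W = 1 ∧ W * U = 1) ∧
    a ∈ Sset v (Uᵀ * B * U)}

/-- The lexicographic order on `Fin n → ℕ` (`a ⪯_lex b`). -/
def lexLe {n : ℕ} (a b : Fin n → ℕ) : Prop :=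
  a = b ∨ ∃ k : Fin n, (∀ l : Fin n, l < k → a l = b l) ∧ a k < b k

/-- `𝔢_i(a)` for a sequence `a` (with `i` ranging over `1,…,n`, 1-based). -/
def eGK {n : ℕ} (a : Fin n → ℕ) (i : ℕ) : ℕ :=
  if Odd i then ∑ k ∈ Finset.univ.filter (fun k : Fin n => (k : ℕ) < i), a k
  else 2 * ((∑ k ∈ Finset.univ.filter (fun k : Fin n => (k : ℕ) < i), a k) / 2)


open Finset

namespace AddValuation

variable {R Γ₀ : Type*} [CommRing R] [LinearOrderedAddCommMonoidWithTop Γ₀]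
  (v : AddValuation R Γ₀)

theorem map_prod {ι : Type*} (s : Finset ι) (f : ι → R) :
    v (∏ i ∈ s, f i) = ∑ i ∈ s, v (f i) := by
  induction s using Finset.cons_induction with
  | empty => simp
  | cons i s hi ih => rw [prod_cons, sum_cons, v.map_mul, ih]

theorem map_intCast_sign_mul {ι : Type*} [Fintype ι] [DecidableEq ι] (σ : Equiv.Perm ι)
    (x : R) : v (((Equiv.Perm.sign σ : ℤ) : R) * x) = v x := by
  rcases Int.units_eq_one_or (Equiv.Perm.sign σ) with h | h <;> simp [h, v.map_neg]

theorem le_map_det {ι : Type*} [Fintype ι] [DecidableEq ι] (D : Matrix ι ι R) {t : Γ₀}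
    (h : ∀ σ : Equiv.Perm ι, t ≤ ∑ i, v (D (σ i) i)) : t ≤ v D.det := by
  rw [det_apply']
  exact v.map_le_sum fun σ _ => by rw [map_intCast_sign_mul, map_prod]; exact h σ

theorem le_map_sum_of_involutive {α : Type*} [Fintype α] {e : α → α}
    (he : Function.Involutive e) {f : α → R} (hf : ∀ x, f (e x) = f x) {t : Γ₀}
    (hfixed : ∀ x, e x = x → t ≤ v (f x)) (hmoved : ∀ x, e x ≠ x → t ≤ v (f x + f x)) :
    t ≤ v (∑ x, f x) := by
  classical
  let κ := Fintype.equivFin α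
  have hdown : ∑ x ∈ univ.filter (fun x => κ (e x) < κ x), f x =
      ∑ x ∈ univ.filter (fun x => κ x < κ (e x)), f x :=
    sum_nbij' e e (by simp [he _]) (by simp [he _]) (fun x _ => he x) (fun x _ => he x)
      (fun x _ => (hf x).symm)
  have hsplit : ∑ x, f x = ∑ x ∈ univ.filter (fun x => e x = x), f x +
      ∑ x ∈ univ.filter (fun x => κ x < κ (e x)), (f x + f x) := by
    have hpoint : ∀ x, f x = (if e x = x then f x else 0) +
        ((if κ x < κ (e x) then f x else 0) + if κ (e x) < κ x then f x else 0) := by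
      intro x
      rcases lt_trichotomy (κ x) (κ (e x)) with h | h | h
      · have hx : e x ≠ x := fun hx => h.ne (by rw [hx])
        simp [h, h.not_gt, hx]
      · simp [κ.injective h.symm]
      · have hx : e x ≠ x := fun hx => h.ne' (by rw [hx])
        simp [h, h.not_gt, hx]
    rw [sum_congr rfl fun x _ => hpoint x, sum_add_distrib, sum_add_distrib, sum_add_distrib,
      ← sum_filter, ← sum_filter, ← sum_filter, hdown]
  rw [hsplit]
  refine v.map_le_add (v.map_le_sum fun x hx => hfixed x (mem_filter.mp hx).2)
    (v.map_le_sum fun x hx => hmoved x fun h => ?_)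
  exact (mem_filter.mp hx).2.ne (by rw [h])

end AddValuation

theorem WithTop.le_of_add_self_le_add_self {x y : WithTop ℤ} (h : y + y ≤ x + x) : y ≤ x :=
  not_lt.mp fun hlt => h.not_gt (WithTop.add_lt_add hlt hlt)

section DeterminantBounds

variable {R : Type*} [CommRing R] (v : AddValuation R (WithTop ℤ))
  {ι : Type*} (D : Matrix ι ι R) {c d : ι → WithTop ℤ}

theorem sum_add_sum_le_sum_map_two_mul
    (hb : ∀ i j, c i + d j ≤ v (2 * D i j) + v (2 * D i j)) (σ : Equiv.Perm ι)
    {s : Finset ι} (hs : {x | σ x ≠ x} ⊆ s) :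
    ∑ i ∈ s, c i + ∑ i ∈ s, d i ≤
      ∑ i ∈ s, v (2 * D (σ i) i) + ∑ i ∈ s, v (2 * D (σ i) i) :=
  calc ∑ i ∈ s, c i + ∑ i ∈ s, d i = ∑ i ∈ s, (c (σ i) + d i) := by
        rw [sum_add_distrib, σ.sum_comp s c hs]
    _ ≤ ∑ i ∈ s, (v (2 * D (σ i) i) + v (2 * D (σ i) i)) := sum_le_sum fun i _ => hb (σ i) i
    _ = _ := sum_add_distrib

variable [Fintype ι] [DecidableEq ι]

theorem le_map_two_pow_card_mul_det
    (hb : ∀ i j, c i + d j ≤ v (2 * D i j) + v (2 * D i j)) {t : WithTop ℤ}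
    (ht : t + t ≤ ∑ i, c i + ∑ i, d i) : t ≤ v (2 ^ Fintype.card ι * D.det) := by
  rw [← det_smul]
  refine v.le_map_det _ fun σ => WithTop.le_of_add_self_le_add_self ?_
  simpa using ht.trans (sum_add_sum_le_sum_map_two_mul v D hb σ (by simp))

/-- Each index moved by `σ` contributes a factor `2 * D (σ i) i`, each fixed one `D i i`. -/
theorem sum_le_map_two_pow_card_support_mul_prod (hdiag : ∀ i, c i ≤ v (D i i))
    (hb : ∀ i j, c i + c j ≤ v (2 * D i j) + v (2 * D i j)) (σ : Equiv.Perm ι) :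
    ∑ i, c i ≤ v (2 ^ #σ.support * ∏ i, D (σ i) i) := by
  have hmoved : ∑ i ∈ σ.support, c i ≤ ∑ i ∈ σ.support, v (2 * D (σ i) i) :=
    WithTop.le_of_add_self_le_add_self
      (sum_add_sum_le_sum_map_two_mul v D hb σ fun x hx => Equiv.Perm.mem_support.mpr hx)
  have hfixed : ∑ i ∈ σ.supportᶜ, c i ≤ ∑ i ∈ σ.supportᶜ, v (D (σ i) i) :=
    sum_le_sum fun i hi => by
      rw [Equiv.Perm.notMem_support.mp (mem_compl.mp hi)]
      exact hdiag i
  have hsplit : 2 ^ #σ.support * ∏ i, D (σ i) i =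
      (∏ i ∈ σ.support, 2 * D (σ i) i) * ∏ i ∈ σ.supportᶜ, D (σ i) i := by
    rw [prod_mul_distrib, prod_const, mul_assoc, prod_mul_prod_compl]
  rw [hsplit, v.map_mul, v.map_prod, v.map_prod, ← sum_add_sum_compl σ.support c]
  exact add_le_add hmoved hfixed

theorem le_map_two_pow_pred_card_mul_det (hodd : Odd (Fintype.card ι)) (hD : D.IsSymm)
    (hdiag : ∀ i, c i ≤ v (D i i)) (hb : ∀ i j, c i + c j ≤ v (2 * D i j) + v (2 * D i j))
    {t : WithTop ℤ} (ht : t ≤ ∑ i, c i) : t ≤ v (2 ^ (Fintype.card ι - 1) * D.det) := by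
  set k := Fintype.card ι
  have hk : 2 * 2 ^ (k - 1) = (2 : R) ^ k := by rw [← pow_succ', Nat.sub_add_cancel hodd.pos]
  rw [det_apply', mul_sum]
  refine v.le_map_sum_of_involutive inv_involutive (fun σ => ?_) (fun σ hσ => ?_) (fun σ _ => ?_)
  · have hprod : ∏ i, D (σ⁻¹ i) i = ∏ i, D (σ i) i := by
      rw [← Equiv.prod_comp σ]
      exact prod_congr rfl fun i _ => by simpa using hD.apply (σ i) i
    rw [Equiv.Perm.sign_inv, hprod]
  · have hsupp : #σ.support ≤ k - 1 := by
      have hev : Even #σ.support :=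
        even_iff_two_dvd.mpr (Equiv.Perm.two_dvd_card_support (by
          rw [sq]; exact inv_eq_iff_mul_eq_one.mp hσ))
      have hle : #σ.support ≤ k := card_le_univ _
      rcases hle.lt_or_eq with h | h
      · omega
      · exact absurd (h ▸ hev) (Nat.not_even_iff_odd.mpr hodd)
    have hpow : (2 : R) ^ (k - 1) = 2 ^ (k - 1 - #σ.support) * 2 ^ #σ.support := by
      rw [← pow_add, Nat.sub_add_cancel hsupp]
    have hv2 : 0 ≤ v ((2 : R) ^ (k - 1 - #σ.support)) := by
      rw [v.map_pow]
      refine nsmul_nonneg ?_ _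
      simpa [one_add_one_eq_two] using v.map_add 1 1
    have hterm : (2 : R) ^ (k - 1) * ((Equiv.Perm.sign σ : ℤ) * ∏ i, D (σ i) i) =
        (Equiv.Perm.sign σ : ℤ) *
          (2 ^ (k - 1 - #σ.support) * (2 ^ #σ.support * ∏ i, D (σ i) i)) := by
      rw [hpow]; ring
    rw [hterm, v.map_intCast_sign_mul, v.map_mul]
    exact ht.trans ((sum_le_map_two_pow_card_support_mul_prod v D hdiag hb σ).trans
      (le_add_of_nonneg_left hv2))
  · have hterm : (2 : R) ^ (k - 1) * ((Equiv.Perm.sign σ : ℤ) * ∏ i, D (σ i) i) +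
        2 ^ (k - 1) * ((Equiv.Perm.sign σ : ℤ) * ∏ i, D (σ i) i) =
        (Equiv.Perm.sign σ : ℤ) * ∏ i, 2 * D (σ i) i := by
      rw [prod_mul_distrib, prod_const, card_univ, ← hk]; ring
    rw [hterm, v.map_intCast_sign_mul, v.map_prod]
    exact WithTop.le_of_add_self_le_add_self ((add_le_add ht ht).trans
      (sum_add_sum_le_sum_map_two_mul v D hb σ (by simp)))

end DeterminantBounds

section MinorExpansion

variable {R : Type*} [CommRing R] {m ι : Type*} [Fintype m] [DecidableEq m] [Fintype ι]

theorem det_mul_eq_sum_det_submatrix (N : Matrix m ι R) (Y : Matrix ι m R) :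
    (N * Y).det = ∑ g : m → ι, (N.submatrix id g).det * ∏ i, Y (g i) i := by
  calc (N * Y).det
      = ∑ σ : Equiv.Perm m, (Equiv.Perm.sign σ : ℤ) * ∏ i, ∑ k, N (σ i) k * Y k i := by
        simp only [det_apply', mul_apply]
    _ = ∑ σ : Equiv.Perm m, ∑ g : m → ι,
          (Equiv.Perm.sign σ : ℤ) * ∏ i, (N (σ i) (g i) * Y (g i) i) := by
        simp only [prod_univ_sum, mul_sum, Fintype.piFinset_univ]
    _ = ∑ g : m → ι, ∑ σ : Equiv.Perm m,
          ((Equiv.Perm.sign σ : ℤ) * ∏ i, N (σ i) (g i)) * ∏ i, Y (g i) i := by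
        rw [sum_comm]
        simp only [prod_mul_distrib, mul_assoc]
    _ = ∑ g : m → ι, (N.submatrix id g).det * ∏ i, Y (g i) i := by
        simp only [← sum_mul, det_apply', submatrix_apply, id]

theorem det_transpose_mul_mul_eq_sum_det_submatrix (C : Matrix ι ι R) (Y : Matrix ι m R) :
    (Yᵀ * C * Y).det =
      ∑ g : m → ι, ∑ h : m → ι, (C.submatrix g h).det * ((∏ i, Y (g i) i) * ∏ i, Y (h i) i) := by
  rw [det_mul_eq_sum_det_submatrix, sum_comm]
  refine sum_congr rfl fun h _ => ?_
  have hminor : (Yᵀ * C).submatrix id h = ((C.submatrix id h)ᵀ * Y)ᵀ := by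
    rw [transpose_mul, transpose_transpose]; rfl
  rw [hminor, det_transpose, det_mul_eq_sum_det_submatrix, sum_mul]
  refine sum_congr rfl fun g _ => ?_
  have hsub : (C.submatrix id h)ᵀ.submatrix id g = (C.submatrix g h)ᵀ := rfl
  rw [hsub, det_transpose, mul_assoc]

end MinorExpansion

theorem Fin.val_le_of_strictMono {k n : ℕ} {e : Fin k → Fin n} (he : StrictMono e) (i : Fin k) :
    (i : ℕ) ≤ e i := by
  have hcard := card_le_card_of_injOn e (s := Iic i) (t := Iic (e i))
    (fun j hj => by simpa using he.monotone (by simpa using hj)) he.injective.injOn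
  simpa using hcard

theorem sum_filter_val_lt_le_sum_comp {n r : ℕ} {a : Fin n → ℕ} (ha : Monotone a)
    {g : Fin r → Fin n} (hg : Function.Injective g) :
    ∑ k ∈ univ.filter (fun k : Fin n => (k : ℕ) < r), a k ≤ ∑ i, a (g i) := by
  set s := univ.image g
  have hs : #s = r := by rw [card_image_of_injective _ hg, card_univ, Fintype.card_fin]
  have hrn : r ≤ n := by simpa [hs] using card_le_univ s
  let e := s.orderEmbOfFin hs
  have hfirst : univ.filter (fun k : Fin n => (k : ℕ) < r) = univ.map (Fin.castLEEmb hrn) := by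
    ext k
    simp only [mem_filter, mem_univ, true_and, mem_map, Fin.castLEEmb_apply]
    exact ⟨fun hk => ⟨⟨k, hk⟩, rfl⟩, fun ⟨i, hi⟩ => hi ▸ i.isLt⟩
  calc ∑ k ∈ univ.filter (fun k : Fin n => (k : ℕ) < r), a k = ∑ i, a (Fin.castLE hrn i) := by
        rw [hfirst, sum_map]; rfl
    _ ≤ ∑ i, a (e i) := sum_le_sum fun i _ => ha (Fin.val_le_of_strictMono e.strictMono i)
    _ = ∑ x ∈ s, a x := by
        conv_rhs => rw [← map_orderEmbOfFin_univ s hs, sum_map]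
        rfl
    _ = ∑ i, a (g i) := sum_image fun x _ y _ h => hg h

theorem det_submatrix_eq_zero_of_not_injective {R : Type*} [CommRing R] {m ι : Type*}
    [Fintype m] [DecidableEq m] (C : Matrix ι ι R) {g h : m → ι}
    (hgh : ¬ (Function.Injective g ∧ Function.Injective h)) : (C.submatrix g h).det = 0 := by
  rw [not_and_or, Function.not_injective_iff, Function.not_injective_iff] at hgh
  rcases hgh with ⟨i, j, hij, hne⟩ | ⟨i, j, hij, hne⟩
  · exact det_zero_of_row_eq hne (by ext k; simp [hij])
  · exact det_zero_of_column_eq hne (fun k => by simp [hij])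

section GrossKeating

variable {K : Type} [Field K] (v : AddValuation K (WithTop ℤ)) {n : ℕ}
  {C : Matrix (Fin n) (Fin n) K} {a : Fin n → ℕ}

theorem le_map_two_pow_mul_det_submatrix (ha : a ∈ Sset v C) {r : ℕ} (g h : Fin r → Fin n) :
    (((∑ k ∈ univ.filter (fun k : Fin n => (k : ℕ) < r), a k : ℕ) : ℤ) : WithTop ℤ) ≤
      v (2 ^ r * (C.submatrix g h).det) := by
  by_cases hgh : Function.Injective g ∧ Function.Injective h
  · obtain ⟨hmono, -, hoff⟩ := ha
    have hsum := add_le_add (sum_filter_val_lt_le_sum_comp hmono hgh.1)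
      (sum_filter_val_lt_le_sum_comp hmono hgh.2)
    simpa using le_map_two_pow_card_mul_det v (C.submatrix g h)
      (c := fun i => ((a (g i) : ℤ) : WithTop ℤ)) (d := fun j => ((a (h j) : ℤ) : WithTop ℤ))
      (fun i j => by simpa using hoff (g i) (h j)) (by exact_mod_cast hsum)
  · rw [det_submatrix_eq_zero_of_not_injective C hgh, mul_zero, v.map_zero]
    exact le_top

theorem le_map_two_pow_pred_mul_det_submatrix_self (hC : C.IsSymm) (ha : a ∈ Sset v C) {r : ℕ}
    (hr : Odd r) (g : Fin r → Fin n) :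
    (((∑ k ∈ univ.filter (fun k : Fin n => (k : ℕ) < r), a k : ℕ) : ℤ) : WithTop ℤ) ≤
      v (2 ^ (r - 1) * (C.submatrix g g).det) := by
  by_cases hg : Function.Injective g
  · obtain ⟨hmono, hdiag, hoff⟩ := ha
    have hsum := sum_filter_val_lt_le_sum_comp hmono hg
    simpa using le_map_two_pow_pred_card_mul_det v (C.submatrix g g) (by simpa using hr)
      (hC.submatrix g) (c := fun i => ((a (g i) : ℤ) : WithTop ℤ)) (fun i => hdiag (g i))
      (fun i j => by simpa using hoff (g i) (g j)) (by exact_mod_cast hsum)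
  · rw [det_submatrix_eq_zero_of_not_injective C (fun h => hg h.1), mul_zero, v.map_zero]
    exact le_top

theorem le_map_two_pow_mul_det_transpose_mul_mul (hC : C.IsSymm) (ha : a ∈ Sset v C) {r : ℕ}
    (Y : Matrix (Fin n) (Fin r) K) (hY : ∀ i j, 0 ≤ v (Y i j)) :
    ((eGK a r : ℤ) : WithTop ℤ) ≤ v (2 ^ (2 * (r / 2)) * (Yᵀ * C * Y).det) := by
  set m := ∑ k ∈ univ.filter (fun k : Fin n => (k : ℕ) < r), a k
  have heGK : eGK a r ≤ m := by
    unfold eGK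
    split_ifs <;> omega
  refine le_trans (b := ((m : ℤ) : WithTop ℤ)) (by exact_mod_cast heGK) ?_
  set P : (Fin r → Fin n) → K := fun g => ∏ i, Y (g i) i
  have hP : ∀ g h, 0 ≤ v (P g * P h) := fun g h => by
    rw [v.map_mul, v.map_prod, v.map_prod]
    exact add_nonneg (sum_nonneg fun i _ => hY _ _) (sum_nonneg fun i _ => hY _ _)
  have hterm : ∀ g h, ((m : ℤ) : WithTop ℤ) ≤ v (2 ^ r * ((C.submatrix g h).det * (P g * P h))) :=
    fun g h => by
      rw [← mul_assoc, v.map_mul]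
      exact le_add_of_le_of_nonneg (le_map_two_pow_mul_det_submatrix v ha g h) (hP g h)
  rw [det_transpose_mul_mul_eq_sum_det_submatrix]
  rcases r.even_or_odd with hr | hr
  · rw [Nat.two_mul_div_two_of_even hr, mul_sum]
    exact v.map_le_sum fun g _ => by
      rw [mul_sum]
      exact v.map_le_sum fun h _ => hterm g h
  · rw [Nat.two_mul_odd_div_two (Nat.odd_iff.mp hr), ← Fintype.sum_prod_type', mul_sum]
    refine v.le_map_sum_of_involutive Prod.swap_swap (fun q => ?_) (fun q hq => ?_)
      (fun q _ => ?_)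
    · have hswap : (C.submatrix q.2 q.1).det = (C.submatrix q.1 q.2).det := by
        rw [← det_transpose, transpose_submatrix, hC.eq]
      simp only [Prod.fst_swap, Prod.snd_swap, hswap]
      ring
    · obtain ⟨g, h⟩ := q
      obtain rfl : h = g := congrArg Prod.fst hq
      rw [← mul_assoc, v.map_mul]
      exact le_add_of_le_of_nonneg (le_map_two_pow_pred_mul_det_submatrix_self v hC ha hr h)
        (hP h h)
    · rw [← two_mul, ← mul_assoc, ← pow_succ', Nat.sub_add_cancel hr.pos]
      exact hterm q.1 q.2

end GrossKeating

theorem statement4_general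
    (K : Type) [Field K]
    (v : AddValuation K (WithTop ℤ))
    (n : ℕ)
    (B : Matrix (Fin n) (Fin n) K) (hsymm : B.IsSymm)
    -- `a = GK(B)` is the Gross–Keating invariant of `B`
    (a : Fin n → ℕ)
    (hGK : a ∈ SsetFull v B ∧ ∀ b ∈ SsetFull v B, lexLe b a)
    (r : ℕ) :
    ∀ X : Matrix (Fin n) (Fin r) K, (∀ i j, 0 ≤ v (X i j)) →
      (Xᵀ * B * X).det ≠ 0 →
      ((eGK a r : ℤ) : WithTop ℤ) ≤ v ((2 : K) ^ (2 * (r / 2)) * (Xᵀ * B * X).det) := by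
  obtain ⟨⟨U, -, ⟨W, hW, hUW, -⟩, ha⟩, -⟩ := hGK
  intro X hX _
  have hC : (Uᵀ * B * U).IsSymm := by
    simp only [IsSymm, transpose_mul, transpose_transpose, hsymm.eq, Matrix.mul_assoc]
  have hY : ∀ i j, 0 ≤ v ((W * X) i j) := fun i j => by
    rw [mul_apply]
    exact v.map_le_sum fun k _ => by
      rw [v.map_mul]
      exact add_nonneg (hW i k) (hX k j)
  have hchange : (W * X)ᵀ * (Uᵀ * B * U) * (W * X) = Xᵀ * B * X :=
    calc (W * X)ᵀ * (Uᵀ * B * U) * (W * X) = Xᵀ * (U * W)ᵀ * B * (U * W) * X := by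
          simp only [transpose_mul, Matrix.mul_assoc]
      _ = Xᵀ * B * X := by simp [hUW]
  rw [← hchange]
  exact le_map_two_pow_mul_det_transpose_mul_mul v hC ha (W * X) hY

theorem statement4 (p : ℕ) [Fact (Nat.Prime p)]
    (K : Type) [Field K] [Algebra ℚ_[p] K] [FiniteDimensional ℚ_[p] K]
    [Algebra ℤ_[p] K] [IsScalarTower ℤ_[p] ℚ_[p] K]
    (v : AddValuation K (WithTop ℤ))
    (hv0 : ∀ x : K, v x = ⊤ ↔ x = 0)
    (hvint : ∀ x : K, 0 ≤ v x ↔ IsIntegral ℤ_[p] x)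
    (hvnorm : ∃ π : K, v π = 1)
    (n : ℕ)
    (B : Matrix (Fin n) (Fin n) K) (hsymm : B.IsSymm)
    (hdiag : ∀ i, 0 ≤ v (B i i))
    (hoff : ∀ i j, i ≠ j → 0 ≤ v (2 * B i j))
    (hnd : B.det ≠ 0)
    -- `a = GK(B)` is the Gross–Keating invariant of `B`
    (a : Fin n → ℕ)
    (hGK : a ∈ SsetFull v B ∧ ∀ b ∈ SsetFull v B, lexLe b a)
    (r : ℕ) (hr1 : 1 ≤ r) (hrn : r ≤ n - 1) :
    ∀ X : Matrix (Fin n) (Fin r) K, (∀ i j, 0 ≤ v (X i j)) →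
      (Xᵀ * B * X).det ≠ 0 →
      ((eGK a r : ℤ) : WithTop ℤ) ≤ v ((2 : K) ^ (2 * (r / 2)) * (Xᵀ * B * X).det) :=
  statement4_general K v n B hsymm a hGK r
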